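/- For a real-valued polynomial $p$ and the vector fields $L_z = \partial/\partial z + i(\partial p/\partial z)(z)\,\partial/\partial t$ acting on functions of $(z,w,t)$, one has $L_z(t + T(w,z)) = -i\sum_{j\ge 1}\frac{1}{j!}\frac{\partial^{j+1}p}{\partial z\,\partial\bar z^j}(z)\,\overline{(w-z)}^j$; in particular, $L_z(t+T(w,z))$ does not depend on $t$ and involves only derivatives of $\Delta p$. -/

import Mathlib

/-!
Write `S(ζ) = ∑_{j≥1} A_{j0}(ζ) (w - ζ)^j`, so that `T(w, ζ) = -2 Im S(ζ) = i (S - S̄)` and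
`∂_z T = i (∂_z S - conj (∂_z̄ S))`. In `∂_z S` the product rule telescopes, because differentiating
`A_{j0}` in `z` gives `(j + 1) A_{j+1,0}`: only `-A_{10} = -p_z` survives, and it cancels the term
`i p_z ∂_t t` of `L_z`. What remains is `-i conj (∑_{j≥1} A_{j1}(z) (w - z)^j)`, and since `p` is
real, `conj A_{j1} = A_{1j}`.
-/

open Finset Complex

/-- The coefficient `A_{jk}(z) = (1/(j!k!)) ∂^{j+k}p/∂z^j∂z̄^k (z)` of the
polynomial `p(z) = ∑_{m,n ≤ d} a m n · z^m · z̄^n`. -/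
noncomputable def Acoef (d : ℕ) (a : ℕ → ℕ → ℂ) (j k : ℕ) (z : ℂ) : ℂ :=
  ∑ m ∈ Finset.range (d + 1), ∑ n ∈ Finset.range (d + 1),
    (m.choose j : ℂ) * (n.choose k : ℂ) * a m n * z ^ (m - j) * (starRingEnd ℂ z) ^ (n - k)

/-- The twist `T(w,z) = -2 Im (∑_{j≥1} (1/j!) ∂^j p/∂z^j (z) (w-z)^j)`. -/
noncomputable def Twist (d : ℕ) (a : ℕ → ℕ → ℂ) (w z : ℂ) : ℝ :=
  -2 * (∑ j ∈ Finset.Icc 1 d, Acoef d a j 0 z * (w - z) ^ j).im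

/-- `Λ(z,δ) = ∑_{j,k ≥ 1} |A_{jk}(z)| δ^{j+k}`. -/
noncomputable def Lam (d : ℕ) (a : ℕ → ℕ → ℂ) (z : ℂ) (δ : ℝ) : ℝ :=
  ∑ j ∈ Finset.Icc 1 d, ∑ k ∈ Finset.Icc 1 d,
    ‖Acoef d a j k z‖ * δ ^ (j + k)

/-- `μ(z,δ) = inf_{j,k ≥ 1, A_{jk}(z) ≠ 0} (|δ|/|A_{jk}(z)|)^{1/(j+k)}`. -/
noncomputable def muF (d : ℕ) (a : ℕ → ℕ → ℂ) (z : ℂ) (δ : ℝ) : ℝ :=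
  sInf {x : ℝ | ∃ j k : ℕ, 1 ≤ j ∧ 1 ≤ k ∧ Acoef d a j k z ≠ 0 ∧
    x = (|δ| / ‖Acoef d a j k z‖) ^ (1 / ((j : ℝ) + (k : ℝ)))}

/-- The Wirtinger derivative `∂f/∂z = (1/2)(∂f/∂x - i ∂f/∂y)`. -/
noncomputable def wDz (f : ℂ → ℂ) (z : ℂ) : ℂ :=
  (fderiv ℝ f z 1 - Complex.I * fderiv ℝ f z Complex.I) / 2

/-- The Wirtinger derivative `∂f/∂z̄ = (1/2)(∂f/∂x + i ∂f/∂y)`. -/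
noncomputable def wDzbar (f : ℂ → ℂ) (z : ℂ) : ℂ :=
  (fderiv ℝ f z 1 + Complex.I * fderiv ℝ f z Complex.I) / 2

/-- The nonisotropic pseudodistance `d_{NI}(z,w,t) = |z-w| + μ(z, t+T(w,z))`. -/
noncomputable def dNI (d : ℕ) (a : ℕ → ℕ → ℂ) (z w : ℂ) (t : ℝ) : ℝ :=
  ‖z - w‖ + muF d a z (t + Twist d a w z)

open ComplexConjugate

noncomputable def wirtingerCLM (α β : ℂ) : ℂ →L[ℝ] ℂ :=
  α • ContinuousLinearMap.id ℝ ℂ + β • (conjCLE : ℂ →L[ℝ] ℂ)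

@[simp]
theorem wirtingerCLM_apply (α β v : ℂ) : wirtingerCLM α β v = α * v + β * conj v := by
  simp [wirtingerCLM, smul_eq_mul]

/-- `α = ∂f/∂z` and `β = ∂f/∂z̄` at `z`. -/
def HasWirtingerDerivAt (f : ℂ → ℂ) (α β z : ℂ) : Prop :=
  HasFDerivAt f (wirtingerCLM α β) z

namespace HasWirtingerDerivAt

variable {f g : ℂ → ℂ} {α β γ δ z : ℂ}

theorem of_hasFDerivAt {L : ℂ →L[ℝ] ℂ} (h : HasFDerivAt f L z)
    (hL : ∀ v, L v = α * v + β * conj v) : HasWirtingerDerivAt f α β z := by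
  unfold HasWirtingerDerivAt
  convert h using 1
  exact ContinuousLinearMap.ext fun v => by rw [hL, wirtingerCLM_apply]

theorem wDz_eq (h : HasWirtingerDerivAt f α β z) : wDz f z = α := by
  rw [wDz, h.fderiv]
  simp only [wirtingerCLM_apply, mul_one, map_one, conj_I]
  linear_combination (β - α) / 2 * I_sq

theorem mul (hf : HasWirtingerDerivAt f α β z) (hg : HasWirtingerDerivAt g γ δ z) :
    HasWirtingerDerivAt (fun ζ => f ζ * g ζ) (α * g z + f z * γ) (β * g z + f z * δ) z :=
  of_hasFDerivAt (HasFDerivAt.mul hf hg) fun v => by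
    simp only [add_apply, smul_apply, smul_eq_mul, wirtingerCLM_apply]
    ring

theorem const_add (c : ℂ) (hf : HasWirtingerDerivAt f α β z) :
    HasWirtingerDerivAt (fun ζ => c + f ζ) α β z :=
  (hasFDerivAt_const_add_iff c).mpr hf

theorem const_mul (c : ℂ) (hf : HasWirtingerDerivAt f α β z) :
    HasWirtingerDerivAt (fun ζ => c * f ζ) (c * α) (c * β) z :=
  of_hasFDerivAt (HasFDerivAt.const_mul hf c) fun v => by
    simp only [smul_apply, smul_eq_mul, wirtingerCLM_apply]
    ring

theorem sum {ι : Type*} {s : Finset ι} {f : ι → ℂ → ℂ} {α β : ι → ℂ}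
    (h : ∀ i ∈ s, HasWirtingerDerivAt (f i) (α i) (β i) z) :
    HasWirtingerDerivAt (fun ζ => ∑ i ∈ s, f i ζ) (∑ i ∈ s, α i) (∑ i ∈ s, β i) z :=
  of_hasFDerivAt (HasFDerivAt.fun_sum h) fun v => by
    simp only [_root_.sum_apply, wirtingerCLM_apply, Finset.sum_add_distrib,
      Finset.sum_mul]

theorem star (hf : HasWirtingerDerivAt f α β z) :
    HasWirtingerDerivAt (fun ζ => conj (f ζ)) (conj β) (conj α) z :=
  of_hasFDerivAt (HasFDerivAt.star hf) fun v => by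
    simp only [ContinuousLinearMap.comp_apply, ContinuousLinearEquiv.coe_coe, starL'_apply,
      wirtingerCLM_apply, star_add, star_mul', RCLike.star_def, conj_conj]
    ring

theorem ofReal_im (hf : HasWirtingerDerivAt f α β z) :
    HasWirtingerDerivAt (fun ζ => ((f ζ).im : ℂ))
      ((α - conj β) / (2 * I)) ((β - conj α) / (2 * I)) z := by
  refine of_hasFDerivAt ((ofRealCLM.comp imCLM).hasFDerivAt.comp z hf) fun v => ?_
  rw [ContinuousLinearMap.comp_apply, ContinuousLinearMap.comp_apply, ofRealCLM_apply,
    imCLM_apply, wirtingerCLM_apply, im_eq_sub_conj]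
  simp only [map_add, map_mul, conj_conj]
  field_simp
  ring

end HasWirtingerDerivAt

theorem HasDerivAt.hasWirtingerDerivAt {f : ℂ → ℂ} {f' z : ℂ} (h : HasDerivAt f f' z) :
    HasWirtingerDerivAt f f' 0 z :=
  .of_hasFDerivAt h.complexToReal_fderiv fun v => by simp

theorem hasWirtingerDerivAt_monomial (c : ℂ) (m n : ℕ) (z : ℂ) :
    HasWirtingerDerivAt (fun ζ => c * ζ ^ m * conj ζ ^ n)
      (c * m * z ^ (m - 1) * conj z ^ n) (c * n * z ^ m * conj z ^ (n - 1)) z := by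
  have hhol := ((hasDerivAt_pow m z).const_mul c).hasWirtingerDerivAt
  have hanti := (hasDerivAt_pow n z).hasWirtingerDerivAt.star
  simp only [map_pow] at hanti
  convert hhol.mul hanti using 1 <;>
    simp only [map_zero, map_mul, map_natCast, map_pow, mul_zero, add_zero, zero_mul, zero_add] <;>
    ring

theorem Nat.cast_choose_mul_sub {R : Type*} [CommSemiring R] (m j : ℕ) :
    (m.choose j : R) * (m - j : ℕ) = (j + 1) * m.choose (j + 1) := by
  rw [mul_comm (j + 1 : R)]
  exact_mod_cast congrArg (Nat.cast : ℕ → R) (Nat.choose_succ_right_eq m j).symm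

section Coefficients

variable (d : ℕ) (a : ℕ → ℕ → ℂ)

theorem hasWirtingerDerivAt_Acoef (j k : ℕ) (z : ℂ) :
    HasWirtingerDerivAt (Acoef d a j k)
      ((j + 1) * Acoef d a (j + 1) k z) ((k + 1) * Acoef d a j (k + 1) z) z := by
  simp only [Acoef, Finset.mul_sum]
  refine .sum fun m _ => .sum fun n _ => ?_
  convert hasWirtingerDerivAt_monomial (m.choose j * n.choose k * a m n) (m - j) (n - k) z
    using 1
  · rw [Nat.sub_sub]
    linear_combination -(n.choose k * a m n * z ^ (m - (j + 1)) * conj z ^ (n - k))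
      * Nat.cast_choose_mul_sub (R := ℂ) m j
  · rw [Nat.sub_sub]
    linear_combination -(m.choose j * a m n * z ^ (m - j) * conj z ^ (n - (k + 1)))
      * Nat.cast_choose_mul_sub (R := ℂ) n k

theorem Acoef_eq_zero_of_lt {j : ℕ} (hj : d < j) (k : ℕ) (z : ℂ) : Acoef d a j k z = 0 :=
  Finset.sum_eq_zero fun m hm => Finset.sum_eq_zero fun n _ => by
    rw [Nat.choose_eq_zero_of_lt (by grind)]
    simp

theorem conj_Acoef (hreal : ∀ m n, conj (a m n) = a n m)
    (j k : ℕ) (z : ℂ) : conj (Acoef d a j k z) = Acoef d a k j z := by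
  simp only [Acoef, map_sum, map_mul, map_pow, conj_conj, map_natCast, hreal]
  rw [Finset.sum_comm]
  exact Finset.sum_congr rfl fun n _ => Finset.sum_congr rfl fun m _ => by ring

noncomputable def taylorTail (w ζ : ℂ) : ℂ :=
  ∑ j ∈ Finset.Icc 1 d, Acoef d a j 0 ζ * (w - ζ) ^ j

theorem hasWirtingerDerivAt_taylorTail (w z : ℂ) :
    HasWirtingerDerivAt (taylorTail d a w) (-Acoef d a 1 0 z)
      (∑ j ∈ Finset.Icc 1 d, Acoef d a j 1 z * (w - z) ^ j) z := by
  set g : ℕ → ℂ := fun j => j * Acoef d a j 0 z * (w - z) ^ (j - 1)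
  have hterm (j : ℕ) : HasWirtingerDerivAt (fun ζ => Acoef d a j 0 ζ * (w - ζ) ^ j)
      (g (j + 1) - g j) (Acoef d a j 1 z * (w - z) ^ j) z := by
    convert (hasWirtingerDerivAt_Acoef d a j 0 z).mul
      (((hasDerivAt_id' z).const_sub w).fun_pow j).hasWirtingerDerivAt using 1
    · simp only [g, Nat.add_sub_cancel]
      push_cast
      ring
    · simp
  have htelescope : ∑ j ∈ Finset.Icc 1 d, (g (j + 1) - g j) = -Acoef d a 1 0 z := by
    rw [← Finset.Ico_add_one_right_eq_Icc, Finset.sum_Ico_sub g (by omega)]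
    simp [g, Acoef_eq_zero_of_lt d a d.lt_add_one]
  rw [← htelescope]
  exact .sum fun j _ => hterm j

end Coefficients

/-- For a real-valued polynomial `p`, the vector field `L_z = ∂/∂z + i p_z ∂/∂t`
applied to `t + T(w,z)` gives `-i ∑_{j≥1} (1/j!) ∂^{j+1}p/∂z∂z̄^j(z) conj(w-z)^j`;
in particular the result does not depend on `t`. -/
theorem Lz_of_t_add_twist (d : ℕ) (a : ℕ → ℕ → ℂ)
    (hreal : ∀ m n, (starRingEnd ℂ) (a m n) = a n m) (z w : ℂ) (t : ℝ) :
    wDz (fun ζ => ((t + Twist d a w ζ : ℝ) : ℂ)) z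
      + Complex.I * Acoef d a 1 0 z
          * deriv (fun s : ℝ => ((s + Twist d a w z : ℝ) : ℂ)) t
      = -Complex.I * ∑ j ∈ Finset.Icc 1 d,
          Acoef d a 1 j z * (starRingEnd ℂ (w - z)) ^ j := by
  have hfun : (fun ζ => ((t + Twist d a w ζ : ℝ) : ℂ))
      = fun ζ => (t : ℂ) + -2 * ((taylorTail d a w ζ).im : ℂ) := by
    funext ζ
    push_cast [Twist, taylorTail]
    rfl
  have hwirt := (((hasWirtingerDerivAt_taylorTail d a w z).ofReal_im).const_mul (-2)).const_add
    (t : ℂ)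
  have hderiv : deriv (fun s : ℝ => ((s + Twist d a w z : ℝ) : ℂ)) t = 1 := by
    simpa using (((hasDerivAt_id t).add_const (Twist d a w z)).ofReal_comp).deriv
  rw [hfun, hwirt.wDz_eq, hderiv, map_sum]
  simp only [map_mul, map_pow, conj_Acoef d a hreal]
  field_simp
  linear_combination
    (Acoef d a 1 0 z + ∑ j ∈ Finset.Icc 1 d, Acoef d a 1 j z * conj (w - z) ^ j) * I_sq
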